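/- Let n be an odd prime and let a = [a₁,...,a_{n(n-1)}] be the staircase array over Z_n × Z_n (concatenation of the stretches S₁,...,S_{(n-1)/2}). Then for all 0 ≤ i < j ≤ n(n-1), the partial sum a_{i+1} + ... + a_j is nonzero in Z_n × Z_n. Consequently, the walk starting at any vertex v₀ of K_n □ K_n with step array a is a path of length n(n-1). -/

import Mathlib

/-!
Each complete stretch sums to `(1, 0)`, so after `q` stretches and `t < 2n` further steps the
walk has moved by `(q + ⌊t/2⌋ d, ⌈t/2⌉ d)`, where `d = 2q + 1`. The difference of the two
coordinates is `q` or `-(q + 1)` according to the parity of `t`; since `q ≤ (n-1)/2`, strictly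
once `t > 0`, it determines `q` and the parity of `t`. Then `0 < d < n` is invertible modulo the
prime `n`, and the first coordinate determines `⌊t/2⌋`. So distinct prefixes have distinct sums;
adjacency holds because every entry of the array has a zero coordinate.
-/

/-- The Cartesian product `K_n □ K_m` on vertex set `ZMod n × ZMod m`: distinct
vertices are adjacent iff they agree in some coordinate. -/
def rook (n m : ℕ) : SimpleGraph (ZMod n × ZMod m) where
  Adj v w := v ≠ w ∧ (v.1 = w.1 ∨ v.2 = w.2)
  symm := by
    refine ⟨?_⟩
    rintro v w ⟨h1, h2⟩
    exact ⟨fun h => h1 h.symm, h2.imp Eq.symm Eq.symm⟩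
  loopless := by refine ⟨?_⟩; rintro v ⟨h, -⟩; exact h rfl

/-- The translation `(a, b) ↦ (a + t, b)` on `ZMod n × ZMod m`. -/
def shift (n m : ℕ) (t : ZMod n) : ZMod n × ZMod m → ZMod n × ZMod m :=
  fun v => (v.1 + t, v.2)

/-- The translation `shift n m t` as a graph homomorphism of `rook n m`. -/
def shiftHom (n m : ℕ) (t : ZMod n) : rook n m →g rook n m where
  toFun := shift n m t
  map_rel' := by
    rintro v w ⟨h1, h2⟩
    constructor
    · intro hc
      apply h1
      have ha := congrArg Prod.fst hc
      have hb := congrArg Prod.snd hc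
      simp only [shift] at ha hb
      exact Prod.ext (by exact add_right_cancel ha) hb
    · rcases h2 with h | h
      · exact Or.inl (by simp [shift, h])
      · exact Or.inr (by simp [shift, h])

/-- The `g`-th entry (for `1 ≤ g ≤ 2n`) of the stretch `S_k` of the staircase array
over `ZMod n × ZMod n`: `(0, 2k-1)` at odd positions `< 2n`, `(2k-1, 0)` at even
positions `< 2n`, and `(2k, 0)` at position `2n`. -/
def stretchEntry (n k g : ℕ) : ZMod n × ZMod n :=
  if g = 2 * n then (((2 * k : ℕ) : ZMod n), 0)
  else if g % 2 = 1 then (0, ((2 * k - 1 : ℕ) : ZMod n))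
  else (((2 * k - 1 : ℕ) : ZMod n), 0)

/-- The `i`-th entry (for `1 ≤ i ≤ n(n-1)`) of the staircase array over
`ZMod n × ZMod n`: the concatenation of the stretches `S₁, …, S_{(n-1)/2}`. -/
def staircase (n i : ℕ) : ZMod n × ZMod n :=
  stretchEntry n ((i - 1) / (2 * n) + 1) ((i - 1) % (2 * n) + 1)


lemma ZMod.natCast_inj_of_lt {n a b : ℕ} (ha : a < n) (hb : b < n) (h : (a : ZMod n) = b) :
    a = b := by
  rwa [ZMod.natCast_eq_natCast_iff', Nat.mod_eq_of_lt ha, Nat.mod_eq_of_lt hb] at h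

lemma rook_adj_add_iff {n m : ℕ} {v e : ZMod n × ZMod m} :
    (rook n m).Adj v (v + e) ↔ e ≠ 0 ∧ (e.1 = 0 ∨ e.2 = 0) := by
  simp [rook, Prod.ext_iff]

lemma staircase_fst_eq_zero_or_snd_eq_zero (n i : ℕ) :
    (staircase n i).1 = 0 ∨ (staircase n i).2 = 0 := by
  unfold staircase stretchEntry
  split_ifs <;> simp

lemma staircase_two_mul_add {n t : ℕ} (q : ℕ) (ht : t < 2 * n) :
    staircase n (2 * n * q + t + 1) = stretchEntry n (q + 1) (t + 1) := by
  have h2n : 0 < 2 * n := by omega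
  simp [staircase, Nat.mul_add_div h2n, Nat.div_eq_of_lt ht, Nat.mod_eq_of_lt ht]

/-- The sum of the first `2 n q + t` entries of the staircase array, for `t < 2 n`. -/
def stairSum (n q t : ℕ) : ZMod n × ZMod n :=
  (q + (t / 2 : ℕ) * (2 * q + 1), ((t + 1) / 2 : ℕ) * (2 * q + 1))

lemma stairSum_add_stretchEntry {n t : ℕ} (q : ℕ) (ht : t + 1 < 2 * n) :
    stairSum n q t + stretchEntry n (q + 1) (t + 1) = stairSum n q (t + 1) := by
  have hk : 2 * (q + 1) - 1 = 2 * q + 1 := by omega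
  unfold stretchEntry
  rw [if_neg ht.ne, hk]
  split_ifs with hpar
  · have h1 : (t + 1) / 2 = t / 2 := by omega
    have h2 : (t + 1 + 1) / 2 = (t + 1) / 2 + 1 := by omega
    simp only [stairSum, Prod.mk_add_mk, h1, h2]
    ext <;> push_cast <;> ring
  · have h1 : (t + 1) / 2 = t / 2 + 1 := by omega
    have h2 : (t + 1 + 1) / 2 = (t + 1) / 2 := by omega
    simp only [stairSum, Prod.mk_add_mk, h1, h2]
    ext <;> push_cast <;> ring

lemma stairSum_add_stretchEntry_two_mul {n : ℕ} (q : ℕ) (hn : 0 < n) :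
    stairSum n q (2 * n - 1) + stretchEntry n (q + 1) (2 * n) = stairSum n (q + 1) 0 := by
  have h1 : (2 * n - 1) / 2 = n - 1 := by omega
  have h2 : (2 * n - 1 + 1) / 2 = n := by omega
  simp only [stairSum, stretchEntry, if_pos, h1, h2, Nat.cast_sub hn, ZMod.natCast_self,
    Prod.mk_add_mk]
  ext <;> push_cast <;> ring

lemma stairSum_add_staircase {n : ℕ} (hn : 0 < n) (i : ℕ) :
    stairSum n (i / (2 * n)) (i % (2 * n)) + staircase n (i + 1) =
      stairSum n ((i + 1) / (2 * n)) ((i + 1) % (2 * n)) := by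
  have h2n : 0 < 2 * n := by omega
  obtain ⟨q, t, ht, rfl⟩ : ∃ q t, t < 2 * n ∧ i = 2 * n * q + t :=
    ⟨_, _, Nat.mod_lt i h2n, (Nat.div_add_mod i (2 * n)).symm⟩
  rw [staircase_two_mul_add q ht, Nat.mul_add_div h2n, Nat.mul_add_mod, Nat.div_eq_of_lt ht,
    Nat.mod_eq_of_lt ht, add_zero]
  rcases Nat.lt_or_ge (t + 1) (2 * n) with hlt | hge
  · rw [add_assoc, Nat.mul_add_div h2n, Nat.mul_add_mod, Nat.div_eq_of_lt hlt,
      Nat.mod_eq_of_lt hlt, add_zero, stairSum_add_stretchEntry q hlt]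
  · have ht' : t + 1 = 2 * n := by omega
    have hi : 2 * n * q + t + 1 = 2 * n * (q + 1) := by rw [add_assoc, ht']; ring
    rw [hi, Nat.mul_div_cancel_left _ h2n, Nat.mul_mod_right, ht',
      show t = 2 * n - 1 by omega, stairSum_add_stretchEntry_two_mul q hn]

lemma sum_Icc_staircase {n : ℕ} (hn : 0 < n) (i : ℕ) :
    ∑ g ∈ Finset.Icc 1 i, staircase n g = stairSum n (i / (2 * n)) (i % (2 * n)) := by
  induction i with
  | zero => simp [stairSum]; rfl
  | succ i ih => rw [Finset.sum_Icc_succ_top (by omega), ih, stairSum_add_staircase hn i]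

lemma stairSum_fst_sub_snd (n q t : ℕ) :
    (stairSum n q t).1 - (stairSum n q t).2 = q - (t % 2 : ℕ) * (2 * q + 1) := by
  have h : (t + 1) / 2 = t / 2 + t % 2 := by omega
  simp only [stairSum, h]
  push_cast; ring

lemma eq_and_mod_two_eq_of_stairSum_eq {n r q q' t t' : ℕ} (hr : n = 2 * r + 1)
    (hq : q ≤ r) (hq' : q' ≤ r) (hqt : 0 < t → q < r) (hqt' : 0 < t' → q' < r)
    (h : stairSum n q t = stairSum n q' t') : q = q' ∧ t % 2 = t' % 2 := by
  have hdiff := congrArg (fun v => v.1 - v.2) h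
  simp only [stairSum_fst_sub_snd] at hdiff
  rcases Nat.mod_two_eq_zero_or_one t with hb | hb <;>
    rcases Nat.mod_two_eq_zero_or_one t' with hb' | hb' <;>
    rw [hb, hb'] at hdiff
  · simp only [Nat.cast_zero, zero_mul, sub_zero] at hdiff
    exact ⟨ZMod.natCast_inj_of_lt (by omega) (by omega) hdiff, by omega⟩
  · have h0 : ((q + q' + 1 : ℕ) : ZMod n) = 0 := by push_cast; linear_combination hdiff
    rw [ZMod.natCast_eq_zero_iff] at h0
    exact absurd (Nat.le_of_dvd (by omega) h0) (by have := hqt' (by omega); omega)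
  · have h0 : ((q + q' + 1 : ℕ) : ZMod n) = 0 := by push_cast; linear_combination -hdiff
    rw [ZMod.natCast_eq_zero_iff] at h0
    exact absurd (Nat.le_of_dvd (by omega) h0) (by have := hqt (by omega); omega)
  · have h1 : ((q + 1 : ℕ) : ZMod n) = (q' + 1 : ℕ) := by push_cast; linear_combination -hdiff
    have := ZMod.natCast_inj_of_lt (by omega) (by omega) h1
    exact ⟨by omega, by omega⟩

lemma eq_of_stairSum_eq {n r q q' t t' : ℕ} (hn : n.Prime) (hr : n = 2 * r + 1)
    (ht : t < 2 * n) (ht' : t' < 2 * n)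
    (hq : q ≤ r) (hq' : q' ≤ r) (hqt : 0 < t → q < r) (hqt' : 0 < t' → q' < r)
    (h : stairSum n q t = stairSum n q' t') : q = q' ∧ t = t' := by
  have : Fact n.Prime := ⟨hn⟩
  obtain ⟨rfl, hpar⟩ := eq_and_mod_two_eq_of_stairSum_eq hr hq hq' hqt hqt' h
  suffices t / 2 = t' / 2 from ⟨rfl, by omega⟩
  rcases Nat.eq_zero_or_pos (t + t') with h0 | hpos
  · omega
  have hd : (2 * q + 1 : ZMod n) ≠ 0 := by
    have hqr : q < r := by
      rcases Nat.eq_zero_or_pos t with h0 | h0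
      · exact hqt' (by omega)
      · exact hqt h0
    have hdvd : ¬ n ∣ 2 * q + 1 := fun hdvd => absurd (Nat.le_of_dvd (by omega) hdvd) (by omega)
    exact_mod_cast mt (ZMod.natCast_eq_zero_iff _ _).1 hdvd
  have hs := congrArg Prod.fst h
  simp only [stairSum, add_right_inj] at hs
  exact ZMod.natCast_inj_of_lt (by omega) (by omega) (mul_right_cancel₀ hd hs)

lemma div_le_and_lt_of_le_mul {m i r : ℕ} (hm : 0 < m) (hi : i ≤ m * r) :
    i / m ≤ r ∧ (0 < i % m → i / m < r) := by
  refine ⟨Nat.div_le_of_le_mul hi, fun ht => (Nat.div_lt_iff_lt_mul hm).2 ?_⟩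
  refine lt_of_le_of_ne (by rwa [mul_comm]) fun h => ?_
  rw [h, Nat.mul_mod_left] at ht
  exact ht.false

lemma eq_of_sum_Icc_staircase_eq {n i j : ℕ} (hn : n.Prime) (ho : Odd n)
    (hi : i ≤ n * (n - 1)) (hj : j ≤ n * (n - 1))
    (h : ∑ g ∈ Finset.Icc 1 i, staircase n g = ∑ g ∈ Finset.Icc 1 j, staircase n g) :
    i = j := by
  obtain ⟨r, hr⟩ := ho
  have h2n : 0 < 2 * n := by omega
  have hN : n * (n - 1) = 2 * n * r := by rw [hr, Nat.add_sub_cancel]; ring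
  obtain ⟨hqi, hti⟩ := div_le_and_lt_of_le_mul h2n (hN ▸ hi)
  obtain ⟨hqj, htj⟩ := div_le_and_lt_of_le_mul h2n (hN ▸ hj)
  rw [sum_Icc_staircase hn.pos, sum_Icc_staircase hn.pos] at h
  obtain ⟨hq, ht⟩ := eq_of_stairSum_eq hn hr (Nat.mod_lt i h2n) (Nat.mod_lt j h2n)
    hqi hqj hti htj h
  rw [← Nat.div_add_mod i (2 * n), ← Nat.div_add_mod j (2 * n), hq, ht]

open Finset in
/-- For `n` an odd prime, every nonempty consecutive partial sum of the staircase
array is nonzero in `ZMod n × ZMod n`; consequently the walk starting at any vertex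
`v₀` of `K_n □ K_n` with the staircase array as step array is a path of length
`n(n-1)`: consecutive vertices are adjacent and all vertices are distinct. -/
theorem staircase_walk_is_path (n : ℕ) (hn : n.Prime) (ho : Odd n) :
    (∀ i j, i < j → j ≤ n * (n - 1) →
      ∑ g ∈ Icc (i + 1) j, staircase n g ≠ 0) ∧
    (∀ v₀ : ZMod n × ZMod n, ∀ i, i < n * (n - 1) →
      (rook n n).Adj (v₀ + ∑ g ∈ Icc 1 i, staircase n g)
        (v₀ + ∑ g ∈ Icc 1 (i + 1), staircase n g)) ∧
    (∀ v₀ : ZMod n × ZMod n, ∀ i j, i ≤ n * (n - 1) → j ≤ n * (n - 1) →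
      v₀ + ∑ g ∈ Icc 1 i, staircase n g = v₀ + ∑ g ∈ Icc 1 j, staircase n g →
      i = j) := by
  have hne : ∀ i j, i < j → j ≤ n * (n - 1) →
      ∑ g ∈ Icc (i + 1) j, staircase n g ≠ 0 := by
    intro i j hij hj h
    have hsplit : ∑ g ∈ Icc 1 i, staircase n g + ∑ g ∈ Icc (i + 1) j, staircase n g =
        ∑ g ∈ Icc 1 j, staircase n g := by
      simpa only [← Icc_add_one_left_eq_Ioc, zero_add] using
        sum_Ioc_consecutive (staircase n) (Nat.zero_le i) hij.le
    rw [h, add_zero] at hsplit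
    exact hij.ne (eq_of_sum_Icc_staircase_eq hn ho (hij.le.trans hj) hj hsplit)
  refine ⟨hne, fun v₀ i hi => ?_, fun v₀ i j hi hj h =>
    eq_of_sum_Icc_staircase_eq hn ho hi hj (add_left_cancel h)⟩
  rw [sum_Icc_succ_top (by omega), ← add_assoc, rook_adj_add_iff]
  exact ⟨by simpa using hne i (i + 1) (by omega) hi,
    staircase_fst_eq_zero_or_snd_eq_zero n (i + 1)⟩
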